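/- arXiv:2505.03951 — 3 statements merged into one kernel-verified Lean document; each statement's English description precedes it below -/
import Mathlib

section
/- Let P = C[x,y,z,w], P_N its homogeneous component of degree N, and L_1 = D_x D_y - D_z D_w. Then L_1 maps P_N onto P_{N-2} for N >= 2, and the kernel of L_1 restricted to P_N has dimension (N+1)^2. -/
open MvPolynomial

/-- Partial differentiation with respect to the `a`-th variable. -/
noncomputable def Dop (a : Fin 4) : Module.End ℂ (MvPolynomial (Fin 4) ℂ) :=
  (pderiv a).toLinearMap

/-- The lowering map `L₁ = DₓD_y - D_zD_w`. -/
noncomputable def Lone : Module.End ℂ (MvPolynomial (Fin 4) ℂ) :=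
  Dop 0 * Dop 1 - Dop 2 * Dop 3

/-! For `i ≠ j` and `k, l ∉ {i, j}`, multiplication by `x_i x_j` almost inverts
`D_i D_j - D_k D_l`: for a monomial `m`,
`(D_i D_j - D_k D_l) (x_i x_j m) = c • m - x_i x_j D_k D_l m` with `c` a positive integer,
and the correction term has smaller `x_k`-exponent. Induction on that exponent puts every
monomial of degree `n` in the image of `P_{n+2}`. Rank–nullity then gives the kernel dimension
`C(N+3,3) - C(N+1,3) = (N+1)^2`. -/

namespace MvPolynomial

variable {σ : Type*}

section CommSemiring

variable {R : Type*} [CommSemiring R]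

theorem pderiv_mem_homogeneousSubmodule {n : ℕ} {p : MvPolynomial σ R} (i : σ)
    (hp : p ∈ homogeneousSubmodule σ R (n + 1)) :
    pderiv i p ∈ homogeneousSubmodule σ R n := by
  rw [mem_homogeneousSubmodule] at hp ⊢
  intro m hm
  rw [coeff_pderiv] at hm
  simpa [map_add, Finsupp.weight_single] using hp (left_ne_zero_of_mul hm)

theorem pderiv_eq_zero_of_mem_homogeneousSubmodule_zero {p : MvPolynomial σ R} (i : σ)
    (hp : p ∈ homogeneousSubmodule σ R 0) : pderiv i p = 0 := by
  ext m
  rw [coeff_pderiv, coeff_zero, (mem_homogeneousSubmodule _ _).1 hp |>.coeff_eq_zero, zero_mul]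
  simp [map_add]

theorem pderiv_X_mul_of_ne {i j : σ} (h : j ≠ i) (f : MvPolynomial σ R) :
    pderiv i (X j * f) = X j * pderiv i f := by
  rw [pderiv_mul, pderiv_X_of_ne h, zero_mul, zero_add]

theorem pderiv_X_mul_monomial (i : σ) (e : σ →₀ ℕ) (r : R) :
    pderiv i (X i * monomial e r) = (e i + 1) • monomial e r := by
  rw [pderiv_mul, pderiv_X_self, one_mul, X_mul_pderiv_monomial, add_smul, one_smul, add_comm]

theorem pderiv_monomial_add_single (i : σ) (e : σ →₀ ℕ) (r : R) :
    pderiv i (monomial (e + Finsupp.single i 1) r) = monomial e (r * (e i + 1)) := by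
  simp [pderiv_monomial]

theorem pderiv_monomial_of_eq_zero {i : σ} {e : σ →₀ ℕ} (he : e i = 0) (r : R) :
    pderiv i (monomial e r) = 0 := by
  simp [pderiv_monomial, he]

theorem X_mul_X_mul_monomial (i j : σ) (e : σ →₀ ℕ) (r : R) :
    X i * X j * monomial e r = monomial (e + Finsupp.single i 1 + Finsupp.single j 1) r := by
  rw [X, X, monomial_mul, monomial_mul, one_mul, one_mul, add_comm, add_assoc]

end CommSemiring

section Ultrahyperbolic

variable {R : Type*} [CommRing R]

variable (R) in
noncomputable def ultrahyperbolic (i j k l : σ) : Module.End R (MvPolynomial σ R) :=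
  (pderiv i).toLinearMap * (pderiv j).toLinearMap - (pderiv k).toLinearMap * (pderiv l).toLinearMap

variable {i j k l : σ}

theorem ultrahyperbolic_apply (p : MvPolynomial σ R) :
    ultrahyperbolic R i j k l p = pderiv i (pderiv j p) - pderiv k (pderiv l p) :=
  rfl

theorem ultrahyperbolic_mem_homogeneousSubmodule {n : ℕ} {p : MvPolynomial σ R}
    (hp : p ∈ homogeneousSubmodule σ R (n + 2)) :
    ultrahyperbolic R i j k l p ∈ homogeneousSubmodule σ R n :=
  sub_mem (pderiv_mem_homogeneousSubmodule i (pderiv_mem_homogeneousSubmodule j hp))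
    (pderiv_mem_homogeneousSubmodule k (pderiv_mem_homogeneousSubmodule l hp))

theorem ultrahyperbolic_eq_zero_of_lt_two {n : ℕ} (hn : n < 2) {p : MvPolynomial σ R}
    (hp : p ∈ homogeneousSubmodule σ R n) : ultrahyperbolic R i j k l p = 0 := by
  rw [ultrahyperbolic_apply]
  interval_cases n
  · simp [pderiv_eq_zero_of_mem_homogeneousSubmodule_zero _ hp]
  · simp [pderiv_eq_zero_of_mem_homogeneousSubmodule_zero _
      (pderiv_mem_homogeneousSubmodule _ hp)]

theorem map_ultrahyperbolic_homogeneousSubmodule_of_lt_two {n : ℕ} (hn : n < 2) :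
    (homogeneousSubmodule σ R n).map (ultrahyperbolic R i j k l) = ⊥ :=
  (Submodule.eq_bot_iff _).2 fun _ ⟨_, hp, hq⟩ => hq ▸ ultrahyperbolic_eq_zero_of_lt_two hn hp

theorem ultrahyperbolic_X_mul_X_mul_monomial (hij : i ≠ j) (hki : k ≠ i) (hkj : k ≠ j)
    (hli : l ≠ i) (hlj : l ≠ j) (e : σ →₀ ℕ) (r : R) :
    ultrahyperbolic R i j k l (X i * X j * monomial e r) =
      ((e i + 1) * (e j + 1)) • monomial e r -
        X i * X j * pderiv k (pderiv l (monomial e r)) := by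
  rw [ultrahyperbolic_apply, mul_assoc, pderiv_X_mul_of_ne hij, pderiv_X_mul_monomial,
    pderiv_X_mul_of_ne hli.symm, pderiv_X_mul_of_ne hlj.symm, pderiv_X_mul_of_ne hki.symm,
    pderiv_X_mul_of_ne hkj.symm, mul_smul_comm, map_nsmul, pderiv_X_mul_monomial, smul_smul,
    mul_comm (e i + 1), mul_assoc]

section CharZero

variable {K : Type*} [Field K] [CharZero K]

theorem monomial_mem_map_ultrahyperbolic (hij : i ≠ j) (hki : k ≠ i) (hkj : k ≠ j)
    (hli : l ≠ i) (hlj : l ≠ j) {n : ℕ} (e : σ →₀ ℕ) (he : e.degree = n) :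
    monomial e (1 : K) ∈
      (homogeneousSubmodule σ K (n + 2)).map (ultrahyperbolic K i j k l) := by
  induction hek : e k using Nat.strong_induction_on generalizing e with
  | _ m ih =>
  have hXX : X i * X j * monomial e (1 : K) ∈ homogeneousSubmodule σ K (n + 2) := by
    rw [X_mul_X_mul_monomial]
    exact isHomogeneous_monomial _ (by simp [map_add, he])
  have hlower : X i * X j * pderiv k (pderiv l (monomial e (1 : K))) ∈
      (homogeneousSubmodule σ K (n + 2)).map (ultrahyperbolic K i j k l) := by
    rcases eq_or_ne (e l) 0 with hl | hl
    · simp [pderiv_monomial_of_eq_zero hl]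
    obtain ⟨g, rfl⟩ : ∃ g, e = g + Finsupp.single l 1 :=
      ⟨_, (Finsupp.sub_add_single_one_cancel hl).symm⟩
    rw [pderiv_monomial_add_single]
    rcases eq_or_ne (g k) 0 with hk | hk
    · simp [pderiv_monomial_of_eq_zero hk]
    obtain ⟨f, rfl⟩ : ∃ f, g = f + Finsupp.single k 1 :=
      ⟨_, (Finsupp.sub_add_single_one_cancel hk).symm⟩
    rw [pderiv_monomial_add_single, X_mul_X_mul_monomial, ← mul_one (_ * _ : K),
      ← smul_eq_mul, ← smul_monomial]
    refine Submodule.smul_mem _ _ (ih _ ?_ _ ?_ rfl)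
    · subst hek
      simp only [Finsupp.coe_add, Pi.add_apply, Finsupp.single_eq_of_ne hki,
        Finsupp.single_eq_of_ne hkj, Finsupp.single_eq_same, add_zero]
      omega
    · simp only [map_add, Finsupp.degree_single] at he ⊢
      omega
  have hc : ((e i + 1) * (e j + 1) : K) ≠ 0 :=
    mul_ne_zero (Nat.cast_add_one_ne_zero _) (Nat.cast_add_one_ne_zero _)
  have key : monomial e (1 : K) = ((e i + 1) * (e j + 1) : K)⁻¹ •
      (ultrahyperbolic K i j k l (X i * X j * monomial e 1) +
        X i * X j * pderiv k (pderiv l (monomial e 1))) := by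
    rw [ultrahyperbolic_X_mul_X_mul_monomial hij hki hkj hli hlj, sub_add_cancel,
      ← Nat.cast_smul_eq_nsmul K, smul_smul]
    push_cast
    rw [inv_mul_cancel₀ hc, one_smul]
  rw [key]
  exact Submodule.smul_mem _ _ (add_mem ⟨_, hXX, rfl⟩ hlower)

theorem map_ultrahyperbolic_homogeneousSubmodule (hij : i ≠ j) (hki : k ≠ i) (hkj : k ≠ j)
    (hli : l ≠ i) (hlj : l ≠ j) (n : ℕ) :
    (homogeneousSubmodule σ K (n + 2)).map (ultrahyperbolic K i j k l) =
      homogeneousSubmodule σ K n := by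
  refine le_antisymm (Submodule.map_le_iff_le_comap.2 fun p hp =>
    ultrahyperbolic_mem_homogeneousSubmodule hp) ?_
  rw [homogeneousSubmodule_eq_finsupp_supported, AddMonoidAlgebra.supported_eq_span_single,
    Submodule.span_le]
  rintro _ ⟨e, he, rfl⟩
  exact monomial_mem_map_ultrahyperbolic hij hki hkj hli hlj e he

end CharZero

end Ultrahyperbolic

section Finrank

variable {K : Type*} [Field K]

instance [Finite σ] (n : ℕ) : Module.Finite K (homogeneousSubmodule σ K n) :=
  Module.Finite.iff_fg.2 (homogeneousSubmodule_fg σ K n)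

theorem finrank_homogeneousSubmodule [Fintype σ] (n : ℕ) :
    Module.finrank K (homogeneousSubmodule σ K n) = (Fintype.card σ + n - 1).choose n := by
  classical
  have hs : {d : σ →₀ ℕ | d.degree = n} =
      ↑((Finset.univ : Finset σ).finsuppAntidiag n) := by
    ext d
    simp [Finsupp.degree_eq_sum]
  rw [homogeneousSubmodule_eq_finsupp_supported, hs]
  refine (Module.finrank_eq_card_basis (basisRestrictSupport K _)).trans ?_
  simp [Finset.card_finsuppAntidiag_nat_eq_choose]

theorem finrank_homogeneousSubmodule_fin (m n : ℕ) :
    Module.finrank K (homogeneousSubmodule (Fin (m + 1)) K n) = (n + m).choose m := by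
  rw [finrank_homogeneousSubmodule, Fintype.card_fin, show m + 1 + n - 1 = n + m by omega,
    Nat.choose_symm_add]

end Finrank

end MvPolynomial

theorem LinearMap.finrank_ker_inf_add_finrank_map {K V W : Type*} [Field K] [AddCommGroup V]
    [Module K V] [AddCommGroup W] [Module K W] (f : V →ₗ[K] W) (p : Submodule K V)
    [FiniteDimensional K p] :
    Module.finrank K ↥(ker f ⊓ p) + Module.finrank K (p.map f) = Module.finrank K p := by
  rw [← (f.domRestrict p).finrank_range_add_finrank_ker, range_domRestrict, add_comm,
    ker_domRestrict, ← Submodule.finrank_map_subtype_eq, Submodule.map_comap_subtype, inf_comm]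

theorem Nat.add_five_choose_three (n : ℕ) :
    (n + 5).choose 3 = (n + 3).choose 3 + (n + 3) ^ 2 := by
  have h₃ := Nat.descFactorial_eq_factorial_mul_choose (n + 3) 3
  have h₅ := Nat.descFactorial_eq_factorial_mul_choose (n + 5) 3
  simp only [Nat.descFactorial_succ, Nat.descFactorial_zero, Nat.factorial, Nat.reduceSubDiff,
    Nat.add_one_sub_one, tsub_zero] at h₃ h₅
  linarith

theorem Lone_eq_ultrahyperbolic : Lone = ultrahyperbolic ℂ 0 1 2 3 :=
  rfl

theorem Lone_image_and_kernel (N : ℕ) :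
    (2 ≤ N →
      Submodule.map Lone (homogeneousSubmodule (Fin 4) ℂ N) =
        homogeneousSubmodule (Fin 4) ℂ (N - 2)) ∧
    Module.finrank ℂ
        ↥(LinearMap.ker Lone ⊓ homogeneousSubmodule (Fin 4) ℂ N) = (N + 1) ^ 2 := by
  have himage (M : ℕ) : (homogeneousSubmodule (Fin 4) ℂ (M + 2)).map Lone =
      homogeneousSubmodule (Fin 4) ℂ M := by
    rw [Lone_eq_ultrahyperbolic]
    exact map_ultrahyperbolic_homogeneousSubmodule (by decide) (by decide) (by decide)
      (by decide) (by decide) M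
  refine ⟨fun hN => ?_, ?_⟩
  · obtain ⟨M, rfl⟩ := Nat.exists_eq_add_of_le' hN
    simpa using himage M
  have hrank := LinearMap.finrank_ker_inf_add_finrank_map Lone (homogeneousSubmodule (Fin 4) ℂ N)
  rw [finrank_homogeneousSubmodule_fin 3] at hrank
  rcases lt_or_ge N 2 with hN | hN
  · have hzero : (homogeneousSubmodule (Fin 4) ℂ N).map Lone = ⊥ := by
      rw [Lone_eq_ultrahyperbolic]
      exact map_ultrahyperbolic_homogeneousSubmodule_of_lt_two hN
    rw [hzero, finrank_bot] at hrank
    interval_cases N <;> simpa using hrank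
  · obtain ⟨M, rfl⟩ := Nat.exists_eq_add_of_le' hN
    rw [himage, finrank_homogeneousSubmodule_fin 3, add_assoc, Nat.add_five_choose_three] at hrank
    linarith
end

section
/- For N a natural number, define polynomials f_0, ..., f_{N+1} in C[eta] by f_0 = 1, f_{-1}=0, and the recurrence eta*f_n = n*f_{n-1} + (N-n)*f_{n+1} for 0 <= n <= N-1, together with eta*f_N = N*f_{N-1} + f_{N+1}. Then f_{N+1}(eta) = (eta-N)(eta-N+2)(eta-N+4)...(eta+N) / N!, i.e., N! * f_{N+1}(eta) equals the product over i = 0,...,N of (eta - N + 2i). -/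
/-!
Rescale to the monic polynomials `g_n = N(N-1)⋯(N-n+1) f_n`; they satisfy
`g_{n+2} = X g_{n+1} - (n+1)(N-n) g_n`, and the top relation gives `g_{N+1} = N! f_{N+1}`.
Writing `g^{(N)}` for the sequence with parameter `N`, the two recurrences alone give
`g^{(N+1)}_{n+1}(X + 1) = g^{(N)}_{n+1}(X) + (n+1) g^{(N)}_n(X)`. At `n = N + 1` the coefficient
`(N+1)(N-N)` vanishes, so `g^{(N)}_{N+2} = X g^{(N)}_{N+1}` and
`g^{(N+1)}_{N+2}(X + 1) = (X + N + 2) g^{(N)}_{N+1}(X)`; induction on `N` gives the product.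
-/

open Polynomial

theorem Nat.cast_descFactorial_succ {R : Type*} [CommRing R] (N k : ℕ) (hk : k ≤ N) :
    (N.descFactorial (k + 1) : R) = ((N : R) - k) * N.descFactorial k := by
  rw [Nat.descFactorial_succ, Nat.cast_mul, Nat.cast_sub hk]

open Finset

namespace Krawtchouk

variable (R : Type*) [CommRing R]

/-- The characteristic polynomial of the leading `n × n` block of the Sylvester–Kac matrix
with off-diagonal entries `1, …, N` and `N, …, 1`. -/
noncomputable def kacPoly (N : ℕ) : ℕ → R[X]
  | 0 => 1
  | 1 => X
  | n + 2 => X * kacPoly N (n + 1) - C (((n : R) + 1) * ((N : R) - n)) * kacPoly N n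

variable {R}

theorem kacPoly_add_two (N n : ℕ) : kacPoly R N (n + 2) =
    X * kacPoly R N (n + 1) - C (((n : R) + 1) * ((N : R) - n)) * kacPoly R N n :=
  rfl

theorem kacPoly_succ_comp_X_add_one (N : ℕ) : ∀ n : ℕ,
    (kacPoly R (N + 1) (n + 1)).comp (X + 1) =
      kacPoly R N (n + 1) + C ((n : R) + 1) * kacPoly R N n
  | 0 => by simp [kacPoly]
  | 1 => by
    simp only [kacPoly, Nat.cast_zero, zero_add, Nat.cast_add, Nat.cast_one, sub_zero, one_mul,
      map_add, map_natCast, map_one, mul_one, sub_comp, mul_comp, X_comp, add_comp, natCast_comp,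
      one_comp]
    ring
  | n + 2 => by
    rw [kacPoly_add_two, sub_comp, mul_comp, mul_comp, X_comp, C_comp,
      kacPoly_succ_comp_X_add_one N (n + 1), kacPoly_succ_comp_X_add_one N n,
      kacPoly_add_two N (n + 1), kacPoly_add_two N n]
    push_cast
    simp only [map_add, map_sub, map_mul, map_one, map_natCast, map_ofNat]
    ring

theorem kacPoly_self_succ (N : ℕ) :
    kacPoly R N (N + 1) = ∏ i ∈ range (N + 1), (X - C ((N : R) - 2 * i)) := by
  induction N with
  | zero => simp [kacPoly]
  | succ M ih =>
    have hstep : kacPoly R M (M + 2) = X * kacPoly R M (M + 1) := by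
      simp [kacPoly_add_two]
    apply taylor_injective (1 : R)
    rw [taylor_apply, taylor_apply, map_one, kacPoly_succ_comp_X_add_one, hstep, ih,
      Polynomial.prod_comp, prod_range_succ _ (M + 1)]
    simp only [sub_comp, X_comp, C_comp]
    have hfactor : ∀ i : ℕ,
        X + 1 - C (((M + 1 : ℕ) : R) - 2 * i) = X - C ((M : R) - 2 * i) := by
      intro i
      push_cast
      simp only [map_sub, map_add, map_mul, map_one, map_natCast, map_ofNat]
      ring
    simp only [hfactor]
    push_cast
    simp only [map_sub, map_add, map_mul, map_one, map_natCast, map_ofNat]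
    ring

section Recurrence

variable {N : ℕ} {f : ℕ → R[X]}

theorem kacPoly_eq_descFactorial_smul (h0 : f 0 = 1)
    (hrec : ∀ n < N, X * f n = (n : R) • f (n - 1) + ((N : R) - n) • f (n + 1)) :
    ∀ n ≤ N, kacPoly R N n = (N.descFactorial n : R) • f n
  | 0, _ => by simp [kacPoly, h0]
  | 1, h1 => by simpa [kacPoly, h0, eq_comm] using hrec 0 h1
  | n + 2, hn => by
    rw [kacPoly_add_two, kacPoly_eq_descFactorial_smul h0 hrec (n + 1) (by omega),
      kacPoly_eq_descFactorial_smul h0 hrec n (by omega), mul_smul_comm, hrec (n + 1) (by omega),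
      Nat.cast_descFactorial_succ N (n + 1) (by omega), Nat.cast_descFactorial_succ N n (by omega),
      Nat.add_sub_cancel, ← smul_eq_C_mul]
    push_cast
    module

theorem kacPoly_self_succ_eq_factorial_smul (h0 : f 0 = 1)
    (hrec : ∀ n < N, X * f n = (n : R) • f (n - 1) + ((N : R) - n) • f (n + 1))
    (htop : X * f N = (N : R) • f (N - 1) + f (N + 1)) :
    kacPoly R N (N + 1) = (N.factorial : R) • f (N + 1) := by
  cases N with
  | zero => simpa [kacPoly, h0, eq_comm] using htop
  | succ M =>
    have hdesc : (M + 1).descFactorial M = (M + 1).factorial := by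
      rw [← Nat.descFactorial_self, Nat.descFactorial_succ, Nat.add_sub_cancel_left, one_mul]
    rw [kacPoly_add_two, kacPoly_eq_descFactorial_smul h0 hrec (M + 1) le_rfl,
      kacPoly_eq_descFactorial_smul h0 hrec M (by omega), Nat.descFactorial_self, hdesc,
      mul_smul_comm, htop, Nat.add_sub_cancel, ← smul_eq_C_mul]
    push_cast
    module

end Recurrence

end Krawtchouk

/-- The top Krawtchouk polynomial: if `f 0 = 1`, `η f_n = n f_{n-1} + (N-n) f_{n+1}`
for `0 ≤ n ≤ N-1` (with `f_{-1} = 0`), and `η f_N = N f_{N-1} + f_{N+1}`, then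
`N! f_{N+1}(η) = (η-N)(η-N+2)⋯(η+N)`. -/
theorem krawtchouk_top (N : ℕ) (f : ℕ → Polynomial ℂ)
    (h0 : f 0 = 1)
    (hrec : ∀ n, n < N →
      X * f n = (n : ℂ) • f (n - 1) + ((N : ℂ) - (n : ℂ)) • f (n + 1))
    (htop : X * f N = (N : ℂ) • f (N - 1) + f (N + 1)) :
    (N.factorial : ℂ) • f (N + 1) =
      ∏ i ∈ Finset.range (N + 1), (X - C ((N : ℂ) - 2 * (i : ℂ))) := by
  rw [← Krawtchouk.kacPoly_self_succ_eq_factorial_smul h0 hrec htop,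
    Krawtchouk.kacPoly_self_succ]
end

section
/- Let N be a natural number. Define P_N as the set of 4-tuples (r,s,t,u) of natural numbers with r+s+t+u = N, and P''_N as the set of integer triples (h,i,j) with 0 <= h,i,j <= N, h+i+j even, h+i+j <= 2N, and satisfying the triangle inequalities h <= i+j, i <= j+h, j <= h+i. Then the map (r,s,t,u) |-> (t+u, u+s, s+t) is a bijection from P_N to P''_N, with inverse (h,i,j) |-> ((2N-h-i-j)/2, (i+j-h)/2, (j+h-i)/2, (h+i-j)/2). -/
/-- The set of profiles of degree `N`: 4-tuples of naturals summing to `N`. -/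
def ProfileSet (N : ℕ) : Type :=
  {p : ℕ × ℕ × ℕ × ℕ // p.1 + p.2.1 + p.2.2.1 + p.2.2.2 = N}

/-- The set `𝒫''_N` of triples `(h,i,j)`. -/
def TriangleSet (N : ℕ) : Type :=
  {q : ℕ × ℕ × ℕ //
    q.1 ≤ N ∧ q.2.1 ≤ N ∧ q.2.2 ≤ N ∧
    Even (q.1 + q.2.1 + q.2.2) ∧ q.1 + q.2.1 + q.2.2 ≤ 2 * N ∧
    q.1 ≤ q.2.1 + q.2.2 ∧ q.2.1 ≤ q.2.2 + q.1 ∧ q.2.2 ≤ q.1 + q.2.1}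

/-!
Writing `h + i + j = 2k`, the inverse is `(N - k, k - h, k - i, k - j)`: the triangle
inequalities and `h + i + j ≤ 2N` keep the truncated subtractions of `ℕ` exact, and parity
keeps the halvings exact, so both composites reduce to linear arithmetic.
-/

def ProfileSet.toTriangle {N : ℕ} (p : ProfileSet N) : TriangleSet N :=
  ⟨(p.val.2.2.1 + p.val.2.2.2, p.val.2.2.2 + p.val.2.1, p.val.2.1 + p.val.2.2.1), by
    obtain ⟨⟨r, s, t, u⟩, hp : r + s + t + u = N⟩ := p
    dsimp only
    exact ⟨by omega, by omega, by omega, ⟨s + t + u, by ring⟩, by omega, by omega, by omega,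
      by omega⟩⟩

def TriangleSet.toProfile {N : ℕ} (q : TriangleSet N) : ProfileSet N :=
  ⟨((2 * N - q.val.1 - q.val.2.1 - q.val.2.2) / 2, (q.val.2.1 + q.val.2.2 - q.val.1) / 2,
      (q.val.2.2 + q.val.1 - q.val.2.1) / 2, (q.val.1 + q.val.2.1 - q.val.2.2) / 2), by
    obtain ⟨⟨h, i, j⟩, -, -, -, ⟨k, hk : h + i + j = k + k⟩, hle : h + i + j ≤ 2 * N,
      hh : h ≤ i + j, hi : i ≤ j + h, hj : j ≤ h + i⟩ := q
    dsimp only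
    omega⟩

theorem TriangleSet.toProfile_toTriangle {N : ℕ} (p : ProfileSet N) :
    p.toTriangle.toProfile = p := by
  obtain ⟨⟨r, s, t, u⟩, hp : r + s + t + u = N⟩ := p
  refine Subtype.ext (Prod.ext ?_ (Prod.ext ?_ (Prod.ext ?_ ?_))) <;>
    dsimp only [ProfileSet.toTriangle, TriangleSet.toProfile] <;> omega

theorem ProfileSet.toTriangle_toProfile {N : ℕ} (q : TriangleSet N) :
    q.toProfile.toTriangle = q := by
  obtain ⟨⟨h, i, j⟩, -, -, -, ⟨k, hk : h + i + j = k + k⟩, -,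
    hh : h ≤ i + j, hi : i ≤ j + h, hj : j ≤ h + i⟩ := q
  refine Subtype.ext (Prod.ext ?_ (Prod.ext ?_ ?_)) <;>
    dsimp only [ProfileSet.toTriangle, TriangleSet.toProfile] <;> omega

def profileTriangleEquiv (N : ℕ) : ProfileSet N ≃ TriangleSet N where
  toFun := ProfileSet.toTriangle
  invFun := TriangleSet.toProfile
  left_inv := TriangleSet.toProfile_toTriangle
  right_inv := ProfileSet.toTriangle_toProfile

/-- The map `(r,s,t,u) ↦ (t+u, u+s, s+t)` is a bijection from `𝒫_N` to `𝒫''_N`,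
with the indicated inverse. -/
theorem profile_triangle_bijection (N : ℕ) :
    ∃ e : ProfileSet N ≃ TriangleSet N,
      (∀ p : ProfileSet N,
        (e p).val = (p.val.2.2.1 + p.val.2.2.2, p.val.2.2.2 + p.val.2.1,
          p.val.2.1 + p.val.2.2.1)) ∧
      (∀ q : TriangleSet N,
        (e.symm q).val =
          ((2 * N - q.val.1 - q.val.2.1 - q.val.2.2) / 2,
           (q.val.2.1 + q.val.2.2 - q.val.1) / 2,
           (q.val.2.2 + q.val.1 - q.val.2.1) / 2,
           (q.val.1 + q.val.2.1 - q.val.2.2) / 2)) :=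
  ⟨profileTriangleEquiv N, fun _ => rfl, fun _ => rfl⟩
end
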